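/- Let T be a tree, let M and A_n (n ≥ 0) be subcontinua of T with M ∩ A_n ≠ ∅ for every n, let π_M : T → T/M be the quotient map collapsing M to a point. If the sequence (M ∩ A_n) converges in the hyperspace of subcontinua of M and (π_M(A_n)) converges in the hyperspace of subcontinua of T/M, then (A_n) converges in the hyperspace of subcontinua of T. -/

import Mathlib

open Set Filter Metric Topology TopologicalSpace

/-- An arc: a subset homeomorphic to `[0,1]`. -/
def IsArc {T : Type*} [TopologicalSpace T] (A : Set T) : Prop :=
  Nonempty (↥(Set.Icc (0:ℝ) 1) ≃ₜ ↥A)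

/-- An arc with endpoints `x` and `y`. -/
def IsArcBetween {T : Type*} [TopologicalSpace T] (A : Set T) (x y : T) : Prop :=
  ∃ e : ↥(Set.Icc (0:ℝ) 1) ≃ₜ ↥A,
    ((e ⟨0, by norm_num⟩ : ↥A) : T) = x ∧ ((e ⟨1, by norm_num⟩ : ↥A) : T) = y

/-- A tree: a continuum which is uniquely arcwise connected and is a point or a
union of finitely many arcs. -/
structure IsTreeSpace (T : Type*) [MetricSpace T] : Prop where
  compact : CompactSpace T
  conn : ConnectedSpace T
  uniqueArc : ∀ x y : T, x ≠ y → ∃! A : Set T, IsArcBetween A x y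
  finiteArcs : (∃ x : T, (Set.univ : Set T) = {x}) ∨
    ∃ s : Finset (Set T), (∀ A ∈ s, IsArc A) ∧ ⋃₀ (s : Set (Set T)) = Set.univ

/-- The unique arc from `x` to `y` in a tree. -/
noncomputable def treeArc {T : Type*} [MetricSpace T] (hT : IsTreeSpace T) (x y : T) :
    Set T := by
  classical exact if h : x = y then {x} else (hT.uniqueArc x y h).choose

/-- `Comp B x` : the connected component of `x` in `B` if `x ∈ B`, else `{x}`. -/
noncomputable def Comp {T : Type*} [TopologicalSpace T] (B : Set T) (x : T) : Set T := by
  classical exact if x ∈ B then connectedComponentIn B x else {x}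

/-- `x` is an endpoint of the whole space (valence one). -/
def IsEnd {T : Type*} [TopologicalSpace T] (x : T) : Prop :=
  IsConnected ({x}ᶜ : Set T)

/-- `x` is a cut-point of the whole space (valence at least two). -/
def IsCut {T : Type*} [TopologicalSpace T] (x : T) : Prop :=
  ¬ IsPreconnected ({x}ᶜ : Set T)

/-- `x` is an endpoint of the subspace `S` (valence one in `S`). -/
def IsEndpointOf {T : Type*} [TopologicalSpace T] (S : Set T) (x : T) : Prop :=
  x ∈ S ∧ IsConnected (S \ {x})

/-- A subcontinuum: a nonempty compact connected subset. -/
def IsSubcontinuum {T : Type*} [TopologicalSpace T] (A : Set T) : Prop :=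
  A.Nonempty ∧ IsCompact A ∧ IsConnected A

/-- Attracting fixed point. -/
def IsAFP {T : Type*} [TopologicalSpace T] (f : T → T) (x : T) : Prop :=
  f x = x ∧ ∀ U : Set T, IsOpen U → x ∈ U →
    ∃ V : Set T, IsOpen V ∧ x ∈ V ∧ V ⊆ U ∧ f '' closure V ⊆ V

/-- `A` is asymptotically periodic under `f`: for some `p ≥ 1` the sequence
`f^{pn}(A)` converges in the Hausdorff metric (to a nonempty compact set). -/
def AsympPeriodic {T : Type*} [MetricSpace T] (f : T → T) (A : Set T) : Prop :=
  ∃ p : ℕ, 1 ≤ p ∧ ∃ L : Set T, L.Nonempty ∧ IsCompact L ∧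
    Tendsto (fun n : ℕ => hausdorffDist (f^[p * n] '' A) L) atTop (𝓝 0)

/-- Kuratowski lower limit of a sequence of sets. -/
def KLiminf {T : Type*} [TopologicalSpace T] (A : ℕ → Set T) : Set T :=
  {x | ∀ U : Set T, IsOpen U → x ∈ U → ∀ᶠ n in atTop, (U ∩ A n).Nonempty}

/-- Kuratowski upper limit of a sequence of sets. -/
def KLimsup {T : Type*} [TopologicalSpace T] (A : ℕ → Set T) : Set T :=
  {x | ∀ U : Set T, IsOpen U → x ∈ U → ∃ᶠ n in atTop, (U ∩ A n).Nonempty}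

/-- Convergence in the hyperspace: the Kuratowski lower and upper limits agree. -/
def KConv {T : Type*} [TopologicalSpace T] (A : ℕ → Set T) : Prop :=
  KLiminf A = KLimsup A

/-- Set-theoretic limit superior of the iterated images of `A`. -/
def Ls {T : Type*} (f : T → T) (A : Set T) : Set T :=
  ⋂ m : ℕ, ⋃ n : ℕ, ⋃ (_ : m ≤ n), f^[n] '' A

/-- The hyperspace of subcontinua of `T`, with the Hausdorff metric. -/
abbrev SubCon (T : Type*) [MetricSpace T] :=
  {A : NonemptyCompacts T // IsConnected (A.1 : Set T)}

/-- The induced map on the hyperspace of subcontinua. -/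
noncomputable def indCon {T : Type*} [MetricSpace T] (f : T → T) (hf : Continuous f) :
    SubCon T → SubCon T :=
  fun A => ⟨⟨⟨f '' (A.1 : Set T), A.1.isCompact.image hf⟩, A.1.nonempty.image f⟩,
    A.2.image f hf.continuousOn⟩

/-- Topological entropy (Bowen–Dinaburg) of `f` on the subset `S`. -/
noncomputable def entropyOn {X : Type*} [MetricSpace X] (f : X → X) (S : Set X) : EReal :=
  Dynamics.coverEntropy f S

/-- Topological entropy of `f`. -/
noncomputable def entropy {X : Type*} [MetricSpace X] (f : X → X) : EReal :=
  Dynamics.coverEntropy f Set.univ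

/-- Maximal cardinality of an `(n,f,ε)`-separated subset of `S`. -/
noncomputable def sepNumOn {X : Type*} [MetricSpace X] (f : X → X) (S : Set X)
    (n : ℕ) (ε : ℝ) : ℕ :=
  sSup {k : ℕ | ∃ E : Finset X, ↑E ⊆ S ∧
    (∀ x ∈ E, ∀ y ∈ E, x ≠ y → ∃ j < n, ε < dist (f^[j] x) (f^[j] y)) ∧ E.card = k}

/-- Minimal cardinality of an `(n,f,ε)`-spanning subset of `S`. -/
noncomputable def spanNumOn {X : Type*} [MetricSpace X] (f : X → X) (S : Set X)
    (n : ℕ) (ε : ℝ) : ℕ :=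
  sInf {k : ℕ | ∃ F : Finset X, ↑F ⊆ S ∧
    (∀ x ∈ S, ∃ y ∈ F, ∀ j < n, dist (f^[j] x) (f^[j] y) ≤ ε) ∧ F.card = k}

noncomputable def sepNum {X : Type*} [MetricSpace X] (f : X → X) (n : ℕ) (ε : ℝ) : ℕ :=
  sepNumOn f Set.univ n ε

noncomputable def spanNum {X : Type*} [MetricSpace X] (f : X → X) (n : ℕ) (ε : ℝ) : ℕ :=
  spanNumOn f Set.univ n ε

/-- The graph of a map. -/
def graphOf {X : Type*} (φ : X → X) : Set (X × X) := {p | p.2 = φ p.1}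

/-- The functional envelope: the closure, in the hyperspace of nonempty compact
subsets of `X × X` with the Hausdorff metric, of the set of graphs of continuous
self-maps of `X`. -/
def FunctionalEnvelope (X : Type*) [MetricSpace X] :
    Set (NonemptyCompacts (X × X)) :=
  closure {G : NonemptyCompacts (X × X) | ∃ φ : X → X, Continuous φ ∧
    (G : Set (X × X)) = graphOf φ}

/-- `F` is the map induced by `f` on the functional envelope:
`F(φ) = f ∘ φ`, i.e. on graphs, `F(G) = (id × f)(G)`. -/
def IsEnvelopeMap {X : Type*} [MetricSpace X] (f : X → X)
    (F : ↥(FunctionalEnvelope X) → ↥(FunctionalEnvelope X)) : Prop :=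
  ∀ G : ↥(FunctionalEnvelope X),
    ((F G : NonemptyCompacts (X × X)) : Set (X × X)) =
      Prod.map id f '' ((G : NonemptyCompacts (X × X)) : Set (X × X))

/-- The setoid on `T` identifying all points of `M` (so that `Quotient` is `T/M`). -/
def collapseSetoid {T : Type*} (M : Set T) : Setoid T where
  r a b := a = b ∨ (a ∈ M ∧ b ∈ M)
  iseqv := by
    refine ⟨fun a => Or.inl rfl, ?_, ?_⟩
    · rintro a b (rfl | ⟨h1, h2⟩)
      exacts [Or.inl rfl, Or.inr ⟨h2, h1⟩]
    · rintro a b c (rfl | ⟨h1, h2⟩) h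
      · exact h
      · rcases h with rfl | ⟨h3, h4⟩
        exacts [Or.inr ⟨h1, h2⟩, Or.inr ⟨h1, h4⟩]
section ArcMachinery

variable {T : Type*} [MetricSpace T]

noncomputable def arcMap {A : Set T} (e : ↥(Set.Icc (0:ℝ) 1) ≃ₜ ↥A) : ℝ → T :=
  fun t => ((e (Set.projIcc (0:ℝ) 1 zero_le_one t) : ↥A) : T)

lemma continuous_arcMap {A : Set T} (e : ↥(Set.Icc (0:ℝ) 1) ≃ₜ ↥A) :
    Continuous (arcMap e) :=
  continuous_subtype_val.comp (e.continuous.comp continuous_projIcc)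

lemma arcMap_mem {A : Set T} (e : ↥(Set.Icc (0:ℝ) 1) ≃ₜ ↥A) (t : ℝ) :
    arcMap e t ∈ A := (e _).2

lemma arcMap_injOn {A : Set T} (e : ↥(Set.Icc (0:ℝ) 1) ≃ₜ ↥A) :
    Set.InjOn (arcMap e) (Set.Icc 0 1) := by
  intro s hs t ht h
  have h' : e (Set.projIcc (0:ℝ) 1 zero_le_one s) = e (Set.projIcc (0:ℝ) 1 zero_le_one t) :=
    Subtype.ext h
  have := e.injective h'
  rw [Set.projIcc_of_mem _ hs, Set.projIcc_of_mem _ ht] at this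
  exact congrArg Subtype.val this

lemma arcMap_symm_apply {A : Set T} (e : ↥(Set.Icc (0:ℝ) 1) ≃ₜ ↥A) {y : T} (hy : y ∈ A) :
    arcMap e ((e.symm ⟨y, hy⟩ : ↥(Set.Icc (0:ℝ) 1)) : ℝ) = y := by
  unfold arcMap
  rw [Set.projIcc_of_mem _ (e.symm ⟨y, hy⟩).2]
  simp

lemma arcMap_image {A : Set T} (e : ↥(Set.Icc (0:ℝ) 1) ≃ₜ ↥A) :
    arcMap e '' Set.Icc 0 1 = A := by
  apply Set.Subset.antisymm
  · rintro _ ⟨t, _, rfl⟩; exact arcMap_mem e t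
  · intro y hy
    exact ⟨_, (e.symm ⟨y, hy⟩).2, arcMap_symm_apply e hy⟩


lemma arc_of_inj (φ : ↥(Set.Icc (0:ℝ) 1) → T) (hc : Continuous φ)
    (hi : Function.Injective φ) :
    IsArcBetween (Set.range φ) (φ ⟨0, by norm_num⟩) (φ ⟨1, by norm_num⟩) := by
  let E : ↥(Set.Icc (0:ℝ) 1) ≃ ↥(Set.range φ) := Equiv.ofInjective φ hi
  have hE : Continuous E := Continuous.subtype_mk hc _
  refine ⟨Continuous.homeoOfEquivCompactToT2 (f := E) hE, ?_, ?_⟩ <;> rfl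

lemma IsArcBetween.ne {A : Set T} {a b : T} (h : IsArcBetween A a b) : a ≠ b := by
  obtain ⟨e, h0, h1⟩ := h
  intro hab
  have : (⟨0, by norm_num⟩ : ↥(Set.Icc (0:ℝ) 1)) = ⟨1, by norm_num⟩ :=
    e.injective (Subtype.ext (h0.trans (hab.trans h1.symm)))
  simpa using congrArg Subtype.val this

lemma IsArcBetween.mem_left {A : Set T} {a b : T} (h : IsArcBetween A a b) : a ∈ A := by
  obtain ⟨e, h0, _⟩ := h; exact h0 ▸ (e _).2

lemma IsArcBetween.mem_right {A : Set T} {a b : T} (h : IsArcBetween A a b) : b ∈ A := by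
  obtain ⟨e, _, h1⟩ := h; exact h1 ▸ (e _).2

lemma IsArcBetween.compact {A : Set T} {a b : T} (h : IsArcBetween A a b) :
    IsCompact A := by
  obtain ⟨e, -, -⟩ := h
  rw [← arcMap_image e]
  exact (isCompact_Icc).image (continuous_arcMap e)

lemma IsArcBetween.closed {A : Set T} {a b : T} (h : IsArcBetween A a b) :
    IsClosed A := h.compact.isClosed

lemma arcMap_proj_eq {A : Set T} (e : ↥(Set.Icc (0:ℝ) 1) ≃ₜ ↥A) {t : ℝ}
    (ht : t ∈ Set.Icc (0:ℝ) 1) :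
    arcMap e t = ((e ⟨t, ht⟩ : ↥A) : T) := by
  unfold arcMap; rw [Set.projIcc_of_mem _ ht]

lemma IsArcBetween.arcMap_ex {A : Set T} {a b : T} (h : IsArcBetween A a b) :
    ∃ e : ↥(Set.Icc (0:ℝ) 1) ≃ₜ ↥A, arcMap e 0 = a ∧ arcMap e 1 = b := by
  obtain ⟨e, h0, h1⟩ := h
  exact ⟨e, by rw [arcMap_proj_eq e (by norm_num)]; exact h0,
    by rw [arcMap_proj_eq e (by norm_num)]; exact h1⟩

lemma subarc {A : Set T} (e : ↥(Set.Icc (0:ℝ) 1) ≃ₜ ↥A) {s t : ℝ}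
    (hs : s ∈ Set.Icc (0:ℝ) 1) (ht : t ∈ Set.Icc (0:ℝ) 1) (hst : s < t) :
    IsArcBetween (arcMap e '' Set.Icc s t) (arcMap e s) (arcMap e t) := by
  have hsub : Set.Icc s t ⊆ Set.Icc (0:ℝ) 1 := Set.Icc_subset_Icc hs.1 ht.2
  have haff : ∀ r : ↥(Set.Icc (0:ℝ) 1), s + (r:ℝ) * (t - s) ∈ Set.Icc s t := by
    rintro ⟨r, hr0, hr1⟩
    constructor <;> nlinarith
  set φ : ↥(Set.Icc (0:ℝ) 1) → T := fun r => arcMap e (s + (r:ℝ) * (t - s)) with hφ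
  have hc : Continuous φ :=
    (continuous_arcMap e).comp (by continuity)
  have hi : Function.Injective φ := by
    intro r r' hrr
    have := arcMap_injOn e (hsub (haff r)) (hsub (haff r')) hrr
    have : (r:ℝ) = (r':ℝ) := by
      have hts : t - s ≠ 0 := sub_ne_zero.mpr hst.ne'
      have h2 : ((r:ℝ) - r') * (t - s) = 0 := by linarith
      rcases mul_eq_zero.mp h2 with h | h
      · linarith
      · exact absurd h hts
    exact Subtype.ext this
  have hrange : Set.range φ = arcMap e '' Set.Icc s t := by
    ext y
    constructor
    · rintro ⟨r, rfl⟩; exact ⟨_, haff r, rfl⟩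
    · rintro ⟨u, hu, rfl⟩
      have hts : (0:ℝ) < t - s := sub_pos.mpr hst
      refine ⟨⟨(u - s) / (t - s), ?_, ?_⟩, ?_⟩
      · exact div_nonneg (by linarith [hu.1]) hts.le
      · rw [div_le_one hts]; linarith [hu.2]
      · show arcMap e (s + (u - s) / (t - s) * (t - s)) = arcMap e u
        rw [div_mul_cancel₀ _ hts.ne']; ring_nf
  have := arc_of_inj φ hc hi
  rw [hrange] at this
  have h0 : φ ⟨0, by norm_num⟩ = arcMap e s := by simp [hφ]
  have h1 : φ ⟨1, by norm_num⟩ = arcMap e t := by simp [hφ]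
  rwa [h0, h1] at this


lemma IsArcBetween.symm {A : Set T} {a b : T} (h : IsArcBetween A a b) :
    IsArcBetween A b a := by
  obtain ⟨e, h0, h1⟩ := h.arcMap_ex
  set φ : ↥(Set.Icc (0:ℝ) 1) → T := fun r => arcMap e (1 - (r:ℝ)) with hφ
  have hmem : ∀ r : ↥(Set.Icc (0:ℝ) 1), 1 - (r:ℝ) ∈ Set.Icc (0:ℝ) 1 := by
    rintro ⟨r, hr0, hr1⟩; constructor <;> simp <;> linarith
  have hc : Continuous φ := (continuous_arcMap e).comp (by continuity)
  have hi : Function.Injective φ := by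
    intro r r' hrr
    have := arcMap_injOn e (hmem r) (hmem r') hrr
    exact Subtype.ext (by linarith)
  have hrange : Set.range φ = A := by
    rw [← arcMap_image e]
    ext y; constructor
    · rintro ⟨r, rfl⟩; exact ⟨_, hmem r, rfl⟩
    · rintro ⟨u, hu, rfl⟩
      exact ⟨⟨1 - u, by constructor <;> [linarith [hu.2]; linarith [hu.1]]⟩, by
        show arcMap e (1 - (1 - u)) = arcMap e u; ring_nf⟩
  have := arc_of_inj φ hc hi
  rw [hrange] at this
  have e0 : φ ⟨0, by norm_num⟩ = b := by simpa [hφ] using h1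
  have e1 : φ ⟨1, by norm_num⟩ = a := by simpa [hφ] using h0
  rwa [e0, e1] at this


variable {hT : IsTreeSpace T}

lemma treeArc_spec {x y : T} (h : x ≠ y) : IsArcBetween (treeArc hT x y) x y := by
  unfold treeArc
  rw [dif_neg h]
  exact (hT.uniqueArc x y h).choose_spec.1

lemma treeArc_unique {x y : T} (h : x ≠ y) {A : Set T} (hA : IsArcBetween A x y) :
    A = treeArc hT x y := by
  unfold treeArc
  rw [dif_neg h]
  exact (hT.uniqueArc x y h).choose_spec.2 A hA

lemma treeArc_symm {x y : T} (h : x ≠ y) : treeArc hT x y = treeArc hT y x :=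
  treeArc_unique h.symm (treeArc_spec h).symm ▸ rfl

lemma treeArc_mem_left {x y : T} (h : x ≠ y) : x ∈ treeArc hT x y :=
  (treeArc_spec h).mem_left

lemma treeArc_mem_right {x y : T} (h : x ≠ y) : y ∈ treeArc hT x y :=
  (treeArc_spec h).mem_right

lemma treeArc_subset {A : Set T} {a b : T} (hA : IsArcBetween A a b) {y z : T}
    (hy : y ∈ A) (hz : z ∈ A) (hyz : y ≠ z) : treeArc hT y z ⊆ A := by
  obtain ⟨e, -, -⟩ := hA
  set s : ℝ := ((e.symm ⟨y, hy⟩ : ↥(Set.Icc (0:ℝ) 1)) : ℝ) with hsdef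
  set t : ℝ := ((e.symm ⟨z, hz⟩ : ↥(Set.Icc (0:ℝ) 1)) : ℝ) with htdef
  have hs : s ∈ Set.Icc (0:ℝ) 1 := (e.symm ⟨y, hy⟩).2
  have ht : t ∈ Set.Icc (0:ℝ) 1 := (e.symm ⟨z, hz⟩).2
  have hys : arcMap e s = y := arcMap_symm_apply e hy
  have hzt : arcMap e t = z := arcMap_symm_apply e hz
  have hst : s ≠ t := by
    intro hh
    exact hyz (by rw [← hys, ← hzt, hh])
  have himg : ∀ {u v : ℝ}, arcMap e '' Set.Icc u v ⊆ A := by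
    intro u v
    rintro _ ⟨r, -, rfl⟩
    exact arcMap_mem e r
  rcases lt_or_gt_of_ne hst with hlt | hlt
  · have := subarc e hs ht hlt
    rw [hys, hzt] at this
    rw [← treeArc_unique hyz this]
    exact himg
  · have := (subarc e ht hs hlt).symm
    rw [hys, hzt] at this
    rw [← treeArc_unique hyz this]
    exact himg


lemma concat_arc {X Y : Set T} {a p c : T} (hX : IsArcBetween X a p)
    (hY : IsArcBetween Y p c) (hXY : X ∩ Y = {p}) :
    IsArcBetween (X ∪ Y) a c := by
  classical
  obtain ⟨eX, hX0, hX1⟩ := hX.arcMap_ex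
  obtain ⟨eY, hY0, hY1⟩ := hY.arcMap_ex
  set g : ℝ → T := fun t => if t ≤ 1/2 then arcMap eX (2*t) else arcMap eY (2*t - 1) with hg
  have hgc : Continuous g := by
    apply Continuous.if_le
    · exact (continuous_arcMap eX).comp (by continuity)
    · exact (continuous_arcMap eY).comp (by continuity)
    · exact continuous_id
    · exact continuous_const
    · intro t ht
      rw [ht]
      norm_num
      rw [hX1, hY0]
  have hmemX : ∀ t : ℝ, t ∈ Set.Icc (0:ℝ) 1 → t ≤ 1/2 → 2*t ∈ Set.Icc (0:ℝ) 1 := by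
    rintro t ⟨h0, h1⟩ h2; constructor <;> linarith
  have hmemY : ∀ t : ℝ, t ∈ Set.Icc (0:ℝ) 1 → ¬ t ≤ 1/2 → 2*t - 1 ∈ Set.Icc (0:ℝ) 1 := by
    rintro t ⟨h0, h1⟩ h2; constructor <;> [linarith; linarith]
  have hinj : Set.InjOn g (Set.Icc 0 1) := by
    intro u hu v hv huv
    rcases le_or_gt u (1/2) with hu2 | hu2 <;> rcases le_or_gt v (1/2) with hv2 | hv2
    · rw [hg] at huv; simp only [if_pos hu2, if_pos hv2] at huv
      have := arcMap_injOn eX (hmemX u hu hu2) (hmemX v hv hv2) huv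
      linarith
    · exfalso
      rw [hg] at huv; simp only [if_pos hu2, if_neg (not_le.mpr hv2)] at huv
      have h1 : arcMap eX (2*u) ∈ X ∩ Y := ⟨arcMap_mem eX _, huv ▸ arcMap_mem eY _⟩
      rw [hXY] at h1
      have h2 : arcMap eY (2*v - 1) ∈ X ∩ Y := ⟨huv ▸ arcMap_mem eX _, arcMap_mem eY _⟩
      rw [hXY] at h2
      have hu' : (2:ℝ)*u = 1 := arcMap_injOn eX (hmemX u hu hu2) (by norm_num)
        (by rw [hX1]; exact h1)
      have hv' : (2:ℝ)*v - 1 = 0 := arcMap_injOn eY (hmemY v hv (not_le.mpr hv2)) (by norm_num)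
        (by rw [hY0]; exact h2)
      linarith
    · exfalso
      rw [hg] at huv; simp only [if_neg (not_le.mpr hu2), if_pos hv2] at huv
      have h1 : arcMap eY (2*u - 1) ∈ X ∩ Y := ⟨huv ▸ arcMap_mem eX _, arcMap_mem eY _⟩
      rw [hXY] at h1
      have h2 : arcMap eX (2*v) ∈ X ∩ Y := ⟨arcMap_mem eX _, huv.symm ▸ arcMap_mem eY _⟩
      rw [hXY] at h2
      have hu' : (2:ℝ)*u - 1 = 0 := arcMap_injOn eY (hmemY u hu (not_le.mpr hu2)) (by norm_num)
        (by rw [hY0]; exact h1)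
      have hv' : (2:ℝ)*v = 1 := arcMap_injOn eX (hmemX v hv hv2) (by norm_num)
        (by rw [hX1]; exact h2)
      linarith
    · rw [hg] at huv
      simp only [if_neg (not_le.mpr hu2), if_neg (not_le.mpr hv2)] at huv
      have := arcMap_injOn eY (hmemY u hu (not_le.mpr hu2)) (hmemY v hv (not_le.mpr hv2)) huv
      linarith
  have himg : g '' Set.Icc 0 1 = X ∪ Y := by
    apply Set.Subset.antisymm
    · rintro _ ⟨t, ht, rfl⟩
      rw [hg]
      by_cases h : t ≤ 1/2
      · simp only [if_pos h]; exact Or.inl (arcMap_mem eX _)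
      · simp only [if_neg h]; exact Or.inr (arcMap_mem eY _)
    · rintro w (hw | hw)
      · rw [← arcMap_image eX] at hw
        obtain ⟨u, hu, rfl⟩ := hw
        refine ⟨u/2, ⟨by linarith [hu.1], by linarith [hu.2]⟩, ?_⟩
        rw [hg]; simp only [if_pos (by linarith [hu.2] : u/2 ≤ 1/2)]
        rw [show 2*(u/2) = u by ring]
      · rw [← arcMap_image eY] at hw
        obtain ⟨u, hu, rfl⟩ := hw
        by_cases h0 : u = 0
        · subst h0
          refine ⟨1/2, by norm_num, ?_⟩
          rw [hg]; simp only [if_pos le_rfl]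
          rw [show (2:ℝ)*(1/2) = 1 by norm_num, hX1, hY0]
        · have hu0 : 0 < u := lt_of_le_of_ne hu.1 (Ne.symm h0)
          refine ⟨(u+1)/2, ⟨by linarith, by linarith [hu.2]⟩, ?_⟩
          rw [hg]; simp only [if_neg (by linarith : ¬ (u+1)/2 ≤ 1/2)]
          rw [show 2*((u+1)/2) - 1 = u by ring]
  set φ : ↥(Set.Icc (0:ℝ) 1) → T := fun r => g (r:ℝ) with hφ
  have hc : Continuous φ := hgc.comp continuous_subtype_val
  have hi : Function.Injective φ := fun r r' h => Subtype.ext (hinj r.2 r'.2 h)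
  have hrange : Set.range φ = X ∪ Y := by
    rw [← himg]
    ext w; constructor
    · rintro ⟨r, rfl⟩; exact ⟨r, r.2, rfl⟩
    · rintro ⟨u, hu, rfl⟩; exact ⟨⟨u, hu⟩, rfl⟩
  have := arc_of_inj φ hc hi
  rw [hrange] at this
  have e0 : φ ⟨0, by norm_num⟩ = a := by
    rw [hφ]; show g 0 = a
    rw [hg]; simp only [if_pos (by norm_num : (0:ℝ) ≤ 1/2)]
    rw [mul_zero, hX0]
  have e1 : φ ⟨1, by norm_num⟩ = c := by
    rw [hφ]; show g 1 = c
    rw [hg]; simp only [if_neg (by norm_num : ¬ (1:ℝ) ≤ 1/2)]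
    rw [show (2:ℝ)*1 - 1 = 1 by ring, hY1]
  rwa [e0, e1] at this


lemma union_arc {a b c : T} (hab : a ≠ b) (hbc : b ≠ c) (hac : a ≠ c) :
    treeArc hT a c ⊆ treeArc hT a b ∪ treeArc hT b c := by
  set X := treeArc hT a b with hXdef
  set β := treeArc hT b c with hβdef
  have hXarc : IsArcBetween X a b := treeArc_spec hab
  obtain ⟨e, he0, he1⟩ := hXarc.arcMap_ex
  have hβarc : IsArcBetween β b c := treeArc_spec hbc
  have hβcl : IsClosed β := hβarc.closed
  set FS := {t : ℝ | t ∈ Set.Icc (0:ℝ) 1 ∧ arcMap e t ∈ β} with hFS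
  have hFScl : IsClosed FS := by
    have : FS = Set.Icc (0:ℝ) 1 ∩ (arcMap e) ⁻¹' β := rfl
    rw [this]
    exact isClosed_Icc.inter (hβcl.preimage (continuous_arcMap e))
  have hFSne : FS.Nonempty := ⟨1, by norm_num, by rw [he1]; exact hβarc.mem_left⟩
  have hFSbdd : BddBelow FS := ⟨0, fun t ht => ht.1.1⟩
  set t0 := sInf FS with ht0def
  have ht0 : t0 ∈ FS := hFScl.csInf_mem hFSne hFSbdd
  set p := arcMap e t0 with hpdef
  have hpβ : p ∈ β := ht0.2
  by_cases h0 : t0 = 0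
  · have hpa : p = a := by rw [hpdef, h0, he0]
    have haβ : a ∈ β := hpa ▸ hpβ
    exact (treeArc_subset hβarc haβ hβarc.mem_right hac).trans Set.subset_union_right
  · have ht0pos : 0 < t0 := lt_of_le_of_ne ht0.1.1 (Ne.symm h0)
    set σ := arcMap e '' Set.Icc 0 t0 with hσdef
    have hσarc : IsArcBetween σ a p := by
      have := subarc e (by norm_num) ht0.1 ht0pos
      rwa [he0] at this
    have hσX : σ ⊆ X := by
      rw [← arcMap_image e]
      exact Set.image_mono (Set.Icc_subset_Icc le_rfl ht0.1.2)
    have hσβ : σ ∩ β ⊆ {p} := by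
      rintro w ⟨⟨t, ht, rfl⟩, hwβ⟩
      have htFS : t ∈ FS := ⟨⟨ht.1, ht.2.trans ht0.1.2⟩, hwβ⟩
      have : t0 ≤ t := csInf_le hFSbdd htFS
      have : t = t0 := le_antisymm ht.2 this
      rw [this]; exact rfl
    by_cases hpc : p = c
    · rw [← hpc]
      exact (treeArc_unique (hpc ▸ hac) hσarc ▸ hσX).trans Set.subset_union_left
    · have hβ' : treeArc hT p c ⊆ β := treeArc_subset hβarc hpβ hβarc.mem_right hpc
      have hβ'arc : IsArcBetween (treeArc hT p c) p c := treeArc_spec hpc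
      have hcap : σ ∩ treeArc hT p c = {p} := by
        apply Set.Subset.antisymm
        · exact fun w hw => hσβ ⟨hw.1, hβ' hw.2⟩
        · rintro w rfl
          exact ⟨hσarc.mem_right, hβ'arc.mem_left⟩
      have hconc := concat_arc hσarc hβ'arc hcap
      rw [← treeArc_unique hac hconc]
      exact Set.union_subset_union hσX hβ'


lemma arc_nbhd {J : Set T} (hJ : IsArc J) {x : T} (hxJ : x ∈ J) {N : Set T}
    (hN : IsOpen N) (hxN : x ∈ N) :
    ∃ C O : Set T, IsOpen O ∧ x ∈ O ∧ O ∩ J ⊆ C ∧ C ⊆ N ∧ x ∈ C ∧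
      ∀ y ∈ C, y ≠ x → treeArc hT y x ⊆ C := by
  obtain ⟨e⟩ := hJ
  set tx : ℝ := ((e.symm ⟨x, hxJ⟩ : ↥(Set.Icc (0:ℝ) 1)) : ℝ) with htxdef
  have htx : tx ∈ Set.Icc (0:ℝ) 1 := (e.symm ⟨x, hxJ⟩).2
  have harc : arcMap e tx = x := arcMap_symm_apply e hxJ
  have hca : ContinuousAt (arcMap e) tx := (continuous_arcMap e).continuousAt
  have hNnhds : (arcMap e) ⁻¹' N ∈ 𝓝 tx := hca (by rw [harc]; exact hN.mem_nhds hxN)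
  obtain ⟨δ, hδpos, hδ⟩ := Metric.mem_nhds_iff.mp hNnhds
  set α := max 0 (tx - δ/2) with hαdef
  set β := min 1 (tx + δ/2) with hβdef
  have hαtx : α ≤ tx := max_le htx.1 (by linarith)
  have htxβ : tx ≤ β := le_min htx.2 (by linarith)
  have hαβ : α < β := by
    rw [hαdef, hβdef]
    rcases max_cases 0 (tx - δ/2) with ⟨h1, h2⟩ | ⟨h1, h2⟩ <;>
      rcases min_cases 1 (tx + δ/2) with ⟨h3, h4⟩ | ⟨h3, h4⟩ <;> rw [h1, h3] <;>
        linarith [htx.1, htx.2]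
  have hα : α ∈ Set.Icc (0:ℝ) 1 := ⟨le_max_left _ _, hαtx.trans htx.2⟩
  have hβ : β ∈ Set.Icc (0:ℝ) 1 := ⟨htx.1.trans htxβ, min_le_left _ _⟩
  set D := Set.Icc α β with hDdef
  have hDsub : D ⊆ Set.Icc (0:ℝ) 1 := Set.Icc_subset_Icc hα.1 hβ.2
  set C := arcMap e '' D with hCdef
  have hDN : ∀ t ∈ D, arcMap e t ∈ N := by
    intro t ht
    apply hδ
    rw [Metric.mem_ball, Real.dist_eq, abs_sub_lt_iff]
    constructor
    · have := ht.2; have : t ≤ tx + δ/2 := le_trans this (min_le_right _ _); linarith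
    · have := ht.1; have : tx - δ/2 ≤ t := le_trans (le_max_right _ _) this; linarith
  have hCN : C ⊆ N := by rintro _ ⟨t, ht, rfl⟩; exact hDN t ht
  have htxD : tx ∈ D := ⟨hαtx, htxβ⟩
  have hxC : x ∈ C := ⟨tx, htxD, harc⟩
  set coordFn : ↥J → ℝ := fun y => ((e.symm y : ↥(Set.Icc (0:ℝ) 1)) : ℝ) with hcoord
  have hcoordc : Continuous coordFn := continuous_subtype_val.comp e.symm.continuous
  have hP : IsOpen (coordFn ⁻¹' Set.Ioo (tx - δ/2) (tx + δ/2)) :=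
    isOpen_Ioo.preimage hcoordc
  obtain ⟨O, hOopen, hOpre⟩ := isOpen_induced_iff.mp hP
  refine ⟨C, O, hOopen, ?_, ?_, hCN, hxC, ?_⟩
  · have : (⟨x, hxJ⟩ : ↥J) ∈ Subtype.val ⁻¹' O := by
      rw [hOpre]
      show coordFn ⟨x, hxJ⟩ ∈ Set.Ioo (tx - δ/2) (tx + δ/2)
      constructor <;> [skip; skip] <;> show _ <;> simp [hcoord, ← htxdef] <;> linarith
    exact this
  · rintro y ⟨hyO, hyJ⟩
    have : (⟨y, hyJ⟩ : ↥J) ∈ Subtype.val ⁻¹' O := hyO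
    rw [hOpre] at this
    set u := coordFn ⟨y, hyJ⟩ with hudef
    have hu01 : u ∈ Set.Icc (0:ℝ) 1 := (e.symm ⟨y, hyJ⟩).2
    have huD : u ∈ D := ⟨max_le hu01.1 this.1.le, le_min hu01.2 this.2.le⟩
    exact ⟨u, huD, arcMap_symm_apply e hyJ⟩
  · intro y hyC hyx
    obtain ⟨u, huD, huy⟩ := hyC
    have hCarc : IsArcBetween C (arcMap e α) (arcMap e β) := subarc e hα hβ hαβ
    exact treeArc_subset hCarc (⟨u, huD, huy⟩ : y ∈ C) hxC hyx


lemma IsArc.compact {J : Set T} (hJ : IsArc J) : IsCompact J := by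
  obtain ⟨e⟩ := hJ
  rw [← arcMap_image e]
  exact isCompact_Icc.image (continuous_arcMap e)

lemma loc_arc_nbhd (hT : IsTreeSpace T) (x : T) {N : Set T} (hN : N ∈ 𝓝 x) :
    ∃ C : Set T, C ∈ 𝓝 x ∧ C ⊆ N ∧ ∀ y ∈ C, y ≠ x → treeArc hT y x ⊆ C := by
  classical
  rcases hT.finiteArcs with ⟨c, hc⟩ | ⟨s, hs_arc, hs_cover⟩
  · have hxc : x = c := by
      have : x ∈ (Set.univ : Set T) := Set.mem_univ x
      rwa [hc, Set.mem_singleton_iff] at this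
    have hxuniv : ({x} : Set T) = Set.univ := by rw [hc, hxc]
    refine ⟨{x}, by rw [hxuniv]; exact Filter.univ_mem, ?_, ?_⟩
    · exact Set.singleton_subset_iff.mpr (mem_of_mem_nhds hN)
    · intro y hy hyx; exact absurd hy (by simpa using hyx)
  · set sx := s.filter (fun J => x ∈ J) with hsx
    set F := ⋃₀ (((s \ sx : Finset (Set T)) : Finset (Set T)) : Set (Set T)) with hF
    have hFcl : IsClosed F := by
      rw [hF, Set.sUnion_eq_biUnion]
      apply Set.Finite.isClosed_biUnion (Finset.finite_toSet _)
      intro J hJ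
      rw [Finset.mem_coe, Finset.mem_sdiff] at hJ
      exact (hs_arc J hJ.1).compact.isClosed
    have hxF : x ∉ F := by
      rintro ⟨J, hJ, hxJ⟩
      rw [Finset.mem_coe, Finset.mem_sdiff] at hJ
      exact hJ.2 (Finset.mem_filter.mpr ⟨hJ.1, hxJ⟩)
    set N₁ := interior N ∩ Fᶜ with hN₁
    have hN₁open : IsOpen N₁ := isOpen_interior.inter hFcl.isOpen_compl
    have hxN₁ : x ∈ N₁ := ⟨mem_interior_iff_mem_nhds.mpr hN, hxF⟩
    have h_all : ∀ J ∈ sx, ∃ C O : Set T, IsOpen O ∧ x ∈ O ∧ O ∩ J ⊆ C ∧ C ⊆ N₁ ∧ x ∈ C ∧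
        ∀ y ∈ C, y ≠ x → treeArc hT y x ⊆ C := by
      intro J hJ
      rw [hsx, Finset.mem_filter] at hJ
      exact arc_nbhd (hs_arc J hJ.1) hJ.2 hN₁open hxN₁
    choose! Cf Of hOopen hxO hOJ hCN hxC harcs using h_all
    set Cfull := ⋃ J ∈ sx, Cf J with hCfull
    set Ofull := N₁ ∩ ⋂ J ∈ sx, Of J with hOfull
    have hOfullopen : IsOpen Ofull :=
      hN₁open.inter (isOpen_biInter_finset fun J hJ => hOopen J hJ)
    have hxOfull : x ∈ Ofull :=
      ⟨hxN₁, Set.mem_biInter fun J hJ => hxO J hJ⟩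
    have hOC : Ofull ⊆ Cfull := by
      intro y hy
      have : y ∈ ⋃₀ ((s : Set (Set T))) := by rw [hs_cover]; exact Set.mem_univ y
      obtain ⟨J, hJs, hyJ⟩ := this
      rw [Finset.mem_coe] at hJs
      by_cases hJx : J ∈ sx
      · have : y ∈ Of J := Set.mem_iInter₂.mp hy.2 J hJx
        exact Set.mem_biUnion hJx (hOJ J hJx ⟨this, hyJ⟩)
      · exfalso
        exact hy.1.2 ⟨J, by rw [Finset.mem_coe, Finset.mem_sdiff]; exact ⟨hJs, hJx⟩, hyJ⟩
    refine ⟨Cfull, ?_, ?_, ?_⟩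
    · exact Filter.mem_of_superset (hOfullopen.mem_nhds hxOfull) hOC
    · intro y hy
      obtain ⟨J, hJ, hyC⟩ := Set.mem_iUnion₂.mp hy
      exact interior_subset (hCN J hJ hyC).1
    · intro y hy hyx
      obtain ⟨J, hJ, hyC⟩ := Set.mem_iUnion₂.mp hy
      exact (harcs J hJ y hyC hyx).trans (Set.subset_biUnion_of_mem hJ)


lemma treeArc_self (hT : IsTreeSpace T) (x : T) : treeArc hT x x = {x} := by
  unfold treeArc; rw [dif_pos rfl]

lemma sep_lemma (hT : IsTreeSpace T) {p q z : T} (hpq : p ≠ q)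
    (hz : z ∈ treeArc hT p q) (hzp : z ≠ p) (hzq : z ≠ q)
    {S : Set T} (hS : IsPreconnected S) (hp : p ∈ S) (hq : q ∈ S) : z ∈ S := by
  by_contra hzS
  set Φ := {y : T | y ≠ z ∧ z ∉ treeArc hT p y} with hΦdef
  set Ψ := {y : T | y ≠ z ∧ y ≠ p ∧ z ∈ treeArc hT p y} with hΨdef
  have key : ∀ y : T, y ≠ z → ∃ C, C ∈ 𝓝 y ∧ z ∉ C ∧
      ∀ w ∈ C, w ≠ y → treeArc hT w y ⊆ C := by
    intro y hyz
    obtain ⟨C, hC𝓝, hCsub, hCarcs⟩ := loc_arc_nbhd hT y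
      (Metric.ball_mem_nhds y (dist_pos.mpr (Ne.symm hyz)))
    refine ⟨C, hC𝓝, fun hzC => ?_, hCarcs⟩
    have := hCsub hzC
    rw [Metric.mem_ball] at this
    exact absurd this (lt_irrefl _)
  have hΦopen : IsOpen Φ := by
    rw [isOpen_iff_mem_nhds]
    rintro y ⟨hyz, hy⟩
    obtain ⟨C, hC𝓝, hzC, hCarcs⟩ := key y hyz
    apply Filter.mem_of_superset hC𝓝
    intro w hwC
    have hwz : w ≠ z := fun h => hzC (h ▸ hwC)
    refine ⟨hwz, fun hzpw => ?_⟩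
    by_cases hwy : w = y
    · exact hy (hwy ▸ hzpw)
    · by_cases hyp : y = p
      · have hwp : w ≠ p := fun h => hwy (h.trans hyp.symm)
        have : treeArc hT p w = treeArc hT w y := by
          rw [hyp]; exact (treeArc_symm (Ne.symm hwp)).symm ▸ rfl
        rw [this] at hzpw
        exact hzC (hCarcs w hwC hwy hzpw)
      · by_cases hwp : w = p
        · rw [hwp, treeArc_self] at hzpw
          exact hzp hzpw
        · have hsub := union_arc (hT := hT) (a := p) (b := y) (c := w)
            (Ne.symm hyp) (Ne.symm hwy) (Ne.symm hwp)
          rcases hsub hzpw with h | h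
          · exact hy h
          · rw [treeArc_symm (fun h' : y = w => hwy h'.symm)] at h
            exact hzC (hCarcs w hwC hwy h)
  have hΨopen : IsOpen Ψ := by
    rw [isOpen_iff_mem_nhds]
    rintro y ⟨hyz, hyp, hy⟩
    obtain ⟨C, hC𝓝, hzC, hCarcs⟩ := key y hyz
    have hball : Metric.ball y (dist p y) ∈ 𝓝 y :=
      Metric.ball_mem_nhds y (dist_pos.mpr (Ne.symm hyp))
    apply Filter.mem_of_superset (Filter.inter_mem hC𝓝 hball)
    rintro w ⟨hwC, hwb⟩
    have hwz : w ≠ z := fun h => hzC (h ▸ hwC)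
    have hwp : w ≠ p := by
      rintro rfl
      rw [Metric.mem_ball, dist_comm] at hwb
      exact absurd hwb (lt_irrefl _)
    refine ⟨hwz, hwp, ?_⟩
    by_contra hno
    by_cases hwy : w = y
    · exact hno (hwy ▸ hy)
    · have hsub := union_arc (hT := hT) (a := p) (b := w) (c := y)
        (Ne.symm hwp) hwy (Ne.symm hyp)
      rcases hsub hy with h | h
      · exact hno h
      · exact hzC (hCarcs w hwC hwy h)
  have hcover : S ⊆ Φ ∪ Ψ := by
    intro y hyS
    have hyz : y ≠ z := fun h => hzS (h ▸ hyS)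
    by_cases hyp : y = p
    · exact Or.inl ⟨hyz, by rw [hyp, treeArc_self]; exact hzp⟩
    · by_cases hzy : z ∈ treeArc hT p y
      · exact Or.inr ⟨hyz, hyp, hzy⟩
      · exact Or.inl ⟨hyz, hzy⟩
  have hpΦ : p ∈ S ∩ Φ := ⟨hp, Ne.symm hzp, by rw [treeArc_self]; exact hzp⟩
  have hqΨ : q ∈ S ∩ Ψ := ⟨hq, Ne.symm hzq, Ne.symm hpq, hz⟩
  obtain ⟨y, -, hyΦ, hyΨ⟩ := hS Φ Ψ hΦopen hΨopen hcover ⟨p, hpΦ⟩ ⟨q, hqΨ⟩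
  exact hyΦ.2 hyΨ.2.2


lemma gate_lemma (hT : IsTreeSpace T) {M : Set T} (hMcl : IsClosed M)
    (hMpc : IsPreconnected M) {S : Set T} (hSpc : IsPreconnected S)
    {a m : T} {σ : Set T} (hσ : IsArcBetween σ a m) (hσM : σ ∩ M = {m})
    (haS : a ∈ S) (hSM : (S ∩ M).Nonempty) : m ∈ S := by
  have ham : a ≠ m := hσ.ne
  have hmM : m ∈ M := by
    have : m ∈ σ ∩ M := hσM ▸ Set.mem_singleton m
    exact this.2
  have haM : a ∉ M := by
    intro haM
    have : a ∈ σ ∩ M := ⟨hσ.mem_left, haM⟩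
    rw [hσM] at this
    exact ham this
  obtain ⟨c, hcS, hcM⟩ := hSM
  have hac : a ≠ c := fun h => haM (h ▸ hcM)
  by_cases hmc : m = c
  · exact hmc ▸ hcS
  · by_cases hmac : m ∈ treeArc hT a c
    · exact sep_lemma hT hac hmac (Ne.symm ham) hmc hSpc haS hcS
    · exfalso
      obtain ⟨e, he0, he1⟩ := (treeArc_spec (hT := hT) hac).arcMap_ex
      set FM := {t : ℝ | t ∈ Set.Icc (0:ℝ) 1 ∧ arcMap e t ∈ M} with hFM
      have hFMcl : IsClosed FM := by
        have : FM = Set.Icc (0:ℝ) 1 ∩ (arcMap e) ⁻¹' M := rfl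
        rw [this]
        exact isClosed_Icc.inter (hMcl.preimage (continuous_arcMap e))
      have hFMne : FM.Nonempty := ⟨1, by norm_num, by rw [he1]; exact hcM⟩
      have hFMbdd : BddBelow FM := ⟨0, fun t ht => ht.1.1⟩
      set t1 := sInf FM with ht1def
      have ht1 : t1 ∈ FM := hFMcl.csInf_mem hFMne hFMbdd
      set m' := arcMap e t1 with hm'def
      have hm'M : m' ∈ M := ht1.2
      have ht1pos : 0 < t1 := by
        rcases lt_or_eq_of_le ht1.1.1 with h | h
        · exact h
        · exfalso; apply haM; rw [← he0, h]; exact hm'M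
      set γ := arcMap e '' Set.Icc 0 t1 with hγdef
      have hγarc : IsArcBetween γ a m' := by
        have := subarc e (by norm_num) ht1.1 ht1pos
        rwa [he0] at this
      have hγM : γ ∩ M = {m'} := by
        apply Set.Subset.antisymm
        · rintro w ⟨⟨t, ht, rfl⟩, hwM⟩
          have htFM : t ∈ FM := ⟨⟨ht.1, ht.2.trans ht1.1.2⟩, hwM⟩
          have : t = t1 := le_antisymm ht.2 (csInf_le hFMbdd htFM)
          rw [this]; exact rfl
        · rintro w rfl
          exact ⟨hγarc.mem_right, hm'M⟩
      have hm'arc : m' ∈ treeArc hT a c := by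
        rw [← arcMap_image e]
        exact ⟨t1, ht1.1, rfl⟩
      have ham' : a ≠ m' := hγarc.ne
      have hmm' : m ≠ m' := fun h => hmac (h ▸ hm'arc)
      have hσeq : σ = treeArc hT m a := treeArc_unique (Ne.symm ham) hσ.symm
      have hγeq : γ = treeArc hT a m' := treeArc_unique ham' hγarc
      have hsub : treeArc hT m m' ⊆ σ ∪ γ := by
        rw [hσeq, hγeq]
        exact union_arc (Ne.symm ham) ham' hmm'
      obtain ⟨ed, hd0, hd1⟩ := (treeArc_spec (hT := hT) hmm').arcMap_ex
      set z := arcMap ed (1/2) with hzdef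
      have hzδ : z ∈ treeArc hT m m' := by
        rw [← arcMap_image ed]
        exact ⟨1/2, by norm_num, rfl⟩
      have hzm : z ≠ m := by
        intro h
        rw [← hd0] at h
        have := arcMap_injOn ed (by norm_num) (by norm_num) h
        norm_num at this
      have hzm' : z ≠ m' := by
        intro h
        rw [← hd1] at h
        have := arcMap_injOn ed (by norm_num) (by norm_num) h
        norm_num at this
      have hzM : z ∉ M := by
        intro hzM
        rcases hsub hzδ with h | h
        · exact hzm (by have : z ∈ σ ∩ M := ⟨h, hzM⟩; rw [hσM] at this; exact this)
        · exact hzm' (by have : z ∈ γ ∩ M := ⟨h, hzM⟩; rw [hγM] at this; exact this)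
      exact hzM (sep_lemma hT hmm' hzδ hzm hzm' hMpc hmM hm'M)


lemma core_lemma (hT : IsTreeSpace T) {M : Set T} (hMcl : IsClosed M)
    (hMpc : IsPreconnected M) {x : T} (hxM : x ∈ M) {V : Set T} (hV : IsOpen V)
    (hxV : x ∈ V) :
    ∃ W : Set T, IsOpen W ∧ x ∈ W ∧ W ⊆ V ∧ ∀ S : Set T, IsPreconnected S →
      (S ∩ M).Nonempty → (S ∩ W).Nonempty → (S ∩ M ∩ V).Nonempty := by
  by_contra hcon
  push_neg at hcon
  have hchoice : ∀ k : ℕ, ∃ S : Set T, IsPreconnected S ∧ (S ∩ M).Nonempty ∧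
      (S ∩ (Metric.ball x (1/(k+1)) ∩ V)).Nonempty ∧ ¬ (S ∩ M ∩ V).Nonempty := by
    intro k
    have hpos : (0:ℝ) < 1/(k+1) := by positivity
    obtain ⟨S, h1, h2, h3, h4⟩ := hcon (Metric.ball x (1/(k+1)) ∩ V)
      (Metric.isOpen_ball.inter hV) ⟨Metric.mem_ball_self hpos, hxV⟩
      Set.inter_subset_right
    exact ⟨S, h1, h2, h3, by rw [h4]; exact Set.not_nonempty_empty⟩
  choose Sf hSpc hSM hSW hSMV using hchoice
  choose yf hyf using hSW
  have hyS : ∀ k, yf k ∈ Sf k := fun k => (hyf k).1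
  have hyV : ∀ k, yf k ∈ V := fun k => (hyf k).2.2
  have hyd : ∀ k, dist (yf k) x < 1/(k+1) := fun k => (hyf k).2.1
  have hyM : ∀ k, yf k ∉ M := by
    intro k hk
    exact hSMV k ⟨yf k, ⟨hyS k, hk⟩, hyV k⟩
  rcases hT.finiteArcs with ⟨c, hc⟩ | ⟨s, hs_arc, hs_cover⟩
  · apply hyM 0
    have h1 : yf 0 ∈ (Set.univ : Set T) := Set.mem_univ _
    have h2 : x ∈ (Set.univ : Set T) := Set.mem_univ _
    rw [hc, Set.mem_singleton_iff] at h1 h2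
    rw [h1, ← h2]
    exact hxM
  · have hpigeon : ∃ J ∈ s, {k : ℕ | yf k ∈ J}.Infinite := by
      by_contra h
      push_neg at h
      have hcov : (Set.univ : Set ℕ) ⊆ ⋃ J ∈ (s : Set (Set T)), {k : ℕ | yf k ∈ J} := by
        intro k _
        have : yf k ∈ ⋃₀ (s : Set (Set T)) := by rw [hs_cover]; exact Set.mem_univ _
        obtain ⟨J, hJ, hkJ⟩ := this
        exact Set.mem_biUnion hJ hkJ
      have : (Set.univ : Set ℕ).Finite :=
        Set.Finite.subset (Set.Finite.biUnion (Finset.finite_toSet s)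
          (fun J hJ => h J hJ)) hcov
      exact Set.infinite_univ this
    obtain ⟨J, hJs, hI⟩ := hpigeon
    have hJarc : IsArc J := hs_arc J hJs
    have hJcl : IsClosed J := hJarc.compact.isClosed
    have hxJ : x ∈ J := by
      rw [← hJcl.closure_eq]
      rw [Metric.mem_closure_iff]
      intro ε hε
      obtain ⟨n, hn⟩ := exists_nat_one_div_lt hε
      obtain ⟨k, hkI, hkn⟩ := hI.exists_gt n
      refine ⟨yf k, hkI, ?_⟩
      rw [dist_comm]
      calc dist (yf k) x < 1/(k+1) := hyd k
        _ ≤ 1/(n+1) := by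
            apply one_div_le_one_div_of_le (by positivity)
            exact_mod_cast Nat.succ_le_succ hkn.le
        _ < ε := hn
    obtain ⟨e⟩ := hJarc
    set tx : ℝ := ((e.symm ⟨x, hxJ⟩ : ↥(Set.Icc (0:ℝ) 1)) : ℝ) with htxdef
    have htx : tx ∈ Set.Icc (0:ℝ) 1 := (e.symm ⟨x, hxJ⟩).2
    have harc : arcMap e tx = x := arcMap_symm_apply e hxJ
    have hca : ContinuousAt (arcMap e) tx := (continuous_arcMap e).continuousAt
    have hVn : (arcMap e) ⁻¹' V ∈ 𝓝 tx := hca (by rw [harc]; exact hV.mem_nhds hxV)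
    obtain ⟨η, hηpos, hηV⟩ := Metric.mem_nhds_iff.mp hVn
    set coordFn : ↥J → ℝ := fun y => ((e.symm y : ↥(Set.Icc (0:ℝ) 1)) : ℝ) with hcoord
    have hcoordc : Continuous coordFn := continuous_subtype_val.comp e.symm.continuous
    obtain ⟨ε, hεpos, hεcoord⟩ :=
      Metric.continuousAt_iff.mp (hcoordc.continuousAt (x := ⟨x, hxJ⟩)) η hηpos
    obtain ⟨n, hn⟩ := exists_nat_one_div_lt hεpos
    obtain ⟨k, hkI, hkn⟩ := hI.exists_gt n
    have hykJ : yf k ∈ J := hkI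
    have hdyk : dist (yf k) x < ε := by
      calc dist (yf k) x < 1/(k+1) := hyd k
        _ ≤ 1/(n+1) := by
            apply one_div_le_one_div_of_le (by positivity)
            exact_mod_cast Nat.succ_le_succ hkn.le
        _ < ε := hn
    set u : ℝ := coordFn ⟨yf k, hykJ⟩ with hudef
    have hu01 : u ∈ Set.Icc (0:ℝ) 1 := (e.symm ⟨yf k, hykJ⟩).2
    have huy : arcMap e u = yf k := arcMap_symm_apply e hykJ
    have huη : |u - tx| < η := by
      have h1 : dist (⟨yf k, hykJ⟩ : ↥J) ⟨x, hxJ⟩ < ε := by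
        rw [Subtype.dist_eq]; exact hdyk
      have h2 := hεcoord h1
      rwa [Real.dist_eq] at h2
    have hux : u ≠ tx := by
      intro h
      apply hyM k
      rw [← huy, h, harc]
      exact hxM
    set FM := {t : ℝ | t ∈ Set.Icc (0:ℝ) 1 ∧ arcMap e t ∈ M} with hFM
    have hFMcl : IsClosed FM := by
      have : FM = Set.Icc (0:ℝ) 1 ∩ (arcMap e) ⁻¹' M := rfl
      rw [this]
      exact isClosed_Icc.inter (hMcl.preimage (continuous_arcMap e))
    have htxFM : tx ∈ FM := ⟨htx, by rw [harc]; exact hxM⟩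
    have huFM : u ∉ FM := fun h => hyM k (huy ▸ h.2)
    rw [abs_sub_lt_iff] at huη
    rcases hux.lt_or_gt with hult | hult
    · set G := FM ∩ Set.Icc u tx with hG
      have hGcl : IsClosed G := hFMcl.inter isClosed_Icc
      have hGne : G.Nonempty := ⟨tx, htxFM, le_of_lt hult, le_rfl⟩
      have hGbdd : BddBelow G := ⟨u, fun t ht => ht.2.1⟩
      set w := sInf G with hw
      have hwG : w ∈ G := hGcl.csInf_mem hGne hGbdd
      have hw01 : w ∈ Set.Icc (0:ℝ) 1 := hwG.1.1
      have hwM : arcMap e w ∈ M := hwG.1.2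
      have huw : u < w := lt_of_le_of_ne hwG.2.1 (fun h => huFM (h ▸ hwG.1))
      set m := arcMap e w with hm
      have hσarc : IsArcBetween (arcMap e '' Set.Icc u w) (yf k) m := by
        have := subarc e hu01 hw01 huw
        rwa [huy] at this
      have hσM : (arcMap e '' Set.Icc u w) ∩ M = {m} := by
        apply Set.Subset.antisymm
        · rintro _ ⟨⟨t, ht, rfl⟩, htM⟩
          have ht01 : t ∈ Set.Icc (0:ℝ) 1 := ⟨hu01.1.trans ht.1, ht.2.trans hw01.2⟩
          have htG : t ∈ G := ⟨⟨ht01, htM⟩, ht.1, ht.2.trans hwG.2.2⟩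
          have : t = w := le_antisymm ht.2 (csInf_le hGbdd htG)
          rw [this]; exact rfl
        · rintro _ rfl
          exact ⟨hσarc.mem_right, hwM⟩
      have hmV : m ∈ V := by
        apply hηV
        rw [Metric.mem_ball, Real.dist_eq, abs_sub_lt_iff]
        constructor
        · linarith [hwG.2.2]
        · linarith [hwG.2.1]
      have hmS : m ∈ Sf k := gate_lemma hT hMcl hMpc (hSpc k) hσarc hσM (hyS k) (hSM k)
      exact hSMV k ⟨m, ⟨hmS, hwM⟩, hmV⟩
    · set G := FM ∩ Set.Icc tx u with hG
      have hGcl : IsClosed G := hFMcl.inter isClosed_Icc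
      have hGne : G.Nonempty := ⟨tx, htxFM, le_rfl, le_of_lt hult⟩
      have hGbdd : BddAbove G := ⟨u, fun t ht => ht.2.2⟩
      set w := sSup G with hw
      have hwG : w ∈ G := hGcl.csSup_mem hGne hGbdd
      have hw01 : w ∈ Set.Icc (0:ℝ) 1 := hwG.1.1
      have hwM : arcMap e w ∈ M := hwG.1.2
      have huw : w < u := lt_of_le_of_ne hwG.2.2 (fun h => huFM (h.symm ▸ hwG.1))
      set m := arcMap e w with hm
      have hσarc : IsArcBetween (arcMap e '' Set.Icc w u) (yf k) m := by
        have := subarc e hw01 hu01 huw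
        rw [huy] at this
        exact this.symm
      have hσM : (arcMap e '' Set.Icc w u) ∩ M = {m} := by
        apply Set.Subset.antisymm
        · rintro _ ⟨⟨t, ht, rfl⟩, htM⟩
          have ht01 : t ∈ Set.Icc (0:ℝ) 1 := ⟨hw01.1.trans ht.1, ht.2.trans hu01.2⟩
          have htG : t ∈ G := ⟨⟨ht01, htM⟩, hwG.2.1.trans ht.1, ht.2⟩
          have : t = w := le_antisymm (le_csSup hGbdd htG) ht.1
          rw [this]; exact rfl
        · rintro _ rfl
          exact ⟨(subarc e hw01 hu01 huw).mem_left, hwM⟩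
      have hmV : m ∈ V := by
        apply hηV
        rw [Metric.mem_ball, Real.dist_eq, abs_sub_lt_iff]
        constructor
        · linarith [hwG.2.2]
        · linarith [hwG.2.1]
      have hmS : m ∈ Sf k := gate_lemma hT hMcl hMpc (hSpc k) hσarc hσM (hyS k) (hSM k)
      exact hSMV k ⟨m, ⟨hmS, hwM⟩, hmV⟩

end ArcMachinery



lemma KLiminf_mem_iff {T : Type*} [TopologicalSpace T] {A : ℕ → Set T} {x : T} :
    x ∈ KLiminf A ↔ ∀ U : Set T, IsOpen U → x ∈ U → ∀ᶠ n in atTop, (U ∩ A n).Nonempty :=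
  Iff.rfl

lemma KLimsup_mem_iff {T : Type*} [TopologicalSpace T] {A : ℕ → Set T} {x : T} :
    x ∈ KLimsup A ↔ ∀ U : Set T, IsOpen U → x ∈ U → ∃ᶠ n in atTop, (U ∩ A n).Nonempty :=
  Iff.rfl

/-- convergence of `A_n` in `Con(T)` follows from convergence of
`M ∩ A_n` and of the images of `A_n` in the quotient tree `T/M`. -/
theorem conv_of_conv_inter_and_quotient {T : Type*} [MetricSpace T]
    (hT : IsTreeSpace T) (M : Set T) (hM : IsSubcontinuum M)
    (A : ℕ → Set T) (hA : ∀ n, IsSubcontinuum (A n))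
    (hMA : ∀ n, (M ∩ A n).Nonempty)
    (h1 : KConv (fun n => M ∩ A n))
    (h2 : KConv (fun n => Quotient.mk (collapseSetoid M) '' A n)) :
    KConv A := by
  have hMcl : IsClosed M := hM.2.1.isClosed
  have hMpc : IsPreconnected M := hM.2.2.isPreconnected
  show KLiminf A = KLimsup A
  apply Set.Subset.antisymm
  · intro x hx
    rw [KLimsup_mem_iff]
    intro U hU hxU
    exact Filter.Eventually.frequently (KLiminf_mem_iff.mp hx U hU hxU)
  · intro x hx
    rw [KLimsup_mem_iff] at hx
    rw [KLiminf_mem_iff]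
    by_cases hxM : x ∈ M
    · by_cases hsup : x ∈ KLimsup (fun n => M ∩ A n)
      · have hinf : x ∈ KLiminf (fun n => M ∩ A n) := h1 ▸ hsup
        intro U hU hxU
        refine (KLiminf_mem_iff.mp hinf U hU hxU).mono ?_
        rintro n ⟨y, hyU, hyMA⟩
        exact ⟨y, hyU, hyMA.2⟩
      · exfalso
        rw [KLimsup_mem_iff] at hsup
        push_neg at hsup
        obtain ⟨V, hVopen, hxV, hV⟩ := hsup
        simp only [← Set.not_nonempty_iff_eq_empty] at hV
        obtain ⟨W, hWopen, hxW, hWV, hWcore⟩ :=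
          core_lemma hT hMcl hMpc hxM hVopen hxV
        have hfreq : ∃ᶠ n in atTop, (W ∩ A n).Nonempty := hx W hWopen hxW
        obtain ⟨n, hn1, hn2⟩ := (hfreq.and_eventually hV).exists
        apply hn2
        have hres := hWcore (A n) (hA n).2.2.isPreconnected
          (by obtain ⟨y, hy⟩ := hMA n; exact ⟨y, hy.2, hy.1⟩)
          (by obtain ⟨y, hyW, hyA⟩ := hn1; exact ⟨y, hyA, hyW⟩)
        obtain ⟨y, ⟨hyA, hyM⟩, hyV⟩ := hres
        exact ⟨y, hyV, hyM, hyA⟩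
    · intro U hU hxU
      set q := Quotient.mk (collapseSetoid M) with hq
      have hqc : Continuous q := continuous_quotient_mk' (s := collapseSetoid M)
      set U' := U ∩ Mᶜ with hU'
      have hU'open : IsOpen U' := hU.inter hMcl.isOpen_compl
      have hxU' : x ∈ U' := ⟨hxU, hxM⟩
      have hpre : q ⁻¹' (q '' U') = U' := by
        apply Set.Subset.antisymm
        · rintro a ⟨u, huU', hqa⟩
          have hrel : u = a ∨ (u ∈ M ∧ a ∈ M) := Quotient.eq.mp hqa
          rcases hrel with rfl | ⟨huM, -⟩
          · exact huU'
          · exact absurd huM huU'.2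
        · exact Set.subset_preimage_image q U'
      have hopen : IsOpen (q '' U') := by
        rw [← (isQuotientMap_quotient_mk' (s := collapseSetoid M)).isOpen_preimage]
        show IsOpen (q ⁻¹' (q '' U'))
        rw [hpre]
        exact hU'open
      have hqx : q x ∈ q '' U' := ⟨x, hxU', rfl⟩
      have hxsup : q x ∈ KLimsup (fun n => q '' A n) := by
        rw [KLimsup_mem_iff]
        intro Vq hVq hxVq
        refine (hx (q ⁻¹' Vq) (hVq.preimage hqc) hxVq).mono ?_
        rintro n ⟨y, hyV, hyA⟩
        exact ⟨q y, hyV, Set.mem_image_of_mem q hyA⟩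
      have hxinf : q x ∈ KLiminf (fun n => q '' A n) := h2 ▸ hxsup
      have hev := KLiminf_mem_iff.mp hxinf (q '' U') hopen hqx
      refine hev.mono ?_
      rintro n ⟨b, hbU, hbA⟩
      obtain ⟨a, haA, rfl⟩ := hbA
      obtain ⟨u, huU', hqu⟩ := hbU
      have hrel : u = a ∨ (u ∈ M ∧ a ∈ M) := Quotient.eq.mp hqu
      rcases hrel with rfl | ⟨huM, -⟩
      · exact ⟨u, huU'.1, haA⟩
      · exact absurd huM huU'.2
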